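/- Coincidence of d_c and d_proj in the presence of a cusp-free minimizing geodesic (Theorem 3, first part): Assume the cost function C is antipodally symmetric. Suppose there exist representatives q₀ ∈ [p₀], q₁ ∈ [p₁] and a curve γ ∈ Γ₀⁺(q₀,q₁) ∪ Γ₀⁻(q₀,q₁) with L(γ) = d_proj([p₀],[p₁]) (i.e., [p₁] can be connected to [p₀] by a minimizing geodesic of d_proj whose spatial projection is cusp-free). Then d_c([p₀],[p₁]) = d_proj([p₀],[p₁]). -/
import Mathlib


open Set MeasureTheory
open scoped ENNReal

noncomputable section

/-- The orientation vector `n(θ) = (cos θ, sin θ)`. -/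
def nvec (θ : ℝ) : ℝ × ℝ := (Real.cos θ, Real.sin θ)

/-- Euclidean dot product on `ℝ × ℝ`. -/
def dot (a b : ℝ × ℝ) : ℝ := a.1 * b.1 + a.2 * b.2

/-- Euclidean norm on `ℝ × ℝ`. -/
def enorm2 (v : ℝ × ℝ) : ℝ := Real.sqrt (v.1 ^ 2 + v.2 ^ 2)

/-- A point of the space of positions and orientations: a position in `ℝ²`
together with an orientation vector in `ℝ²` (intended to be a unit vector). -/
abbrev Pt := (ℝ × ℝ) × (ℝ × ℝ)

/-- The antipode `p̄ = (x, -n)` of a point `p = (x, n)`. -/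
def antipode (p : Pt) : Pt := (p.1, -p.2)

/-- A candidate curve, given by a spatial part `x` and an angular part `θ`. -/
structure Curve where
  x : ℝ → ℝ × ℝ
  th : ℝ → ℝ

/-- A map is piecewise continuously differentiable on `[0,1]`: it is continuous
on `[0,1]` and, off a finite set, differentiable with continuous derivative. -/
def PiecewiseC1 {E : Type*} [NormedAddCommGroup E] [NormedSpace ℝ E] (f : ℝ → E) : Prop :=
  ContinuousOn f (Icc 0 1) ∧
    ∃ s : Finset ℝ, ∀ t ∈ Icc (0 : ℝ) 1 \ (s : Set ℝ),
      DifferentiableAt ℝ f t ∧ ContinuousAt (deriv f) t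

namespace Curve

/-- Both components of the curve are piecewise `C¹`. -/
def Admissible (γ : Curve) : Prop := PiecewiseC1 γ.x ∧ PiecewiseC1 γ.th

/-- The spatial control `u¹(t) = ẋ(t) ⬝ n(θ(t))`. -/
def u1 (γ : Curve) (t : ℝ) : ℝ := dot (deriv γ.x t) (nvec (γ.th t))

/-- The angular control `u³(t) = θ̇(t)`. -/
def u3 (γ : Curve) (t : ℝ) : ℝ := deriv γ.th t

/-- Horizontality: wherever the spatial derivative exists,
`ẋ(t) ∈ span {n(θ(t))}`. -/
def Horizontal (γ : Curve) : Prop :=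
  ∀ t ∈ Icc (0 : ℝ) 1, DifferentiableAt ℝ γ.x t →
    ∃ c : ℝ, deriv γ.x t = c • nvec (γ.th t)

/-- Boundary conditions: the curve joins `p₀` to `p₁` (the angular boundary
conditions hold modulo `2π`, which is expressed via the orientation vectors). -/
def Joins (γ : Curve) (p₀ p₁ : Pt) : Prop :=
  γ.x 0 = p₀.1 ∧ γ.x 1 = p₁.1 ∧ nvec (γ.th 0) = p₀.2 ∧ nvec (γ.th 1) = p₁.2

end Curve

/-- The length `L(γ) = ∫₀¹ C(x(t), n(θ(t))) √(ξ² u¹(t)² + u³(t)²) dt`. -/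
def length (ξ : ℝ) (C : Pt → ℝ) (γ : Curve) : ℝ :=
  ∫ t in (0 : ℝ)..1,
    C (γ.x t, nvec (γ.th t)) * Real.sqrt (ξ ^ 2 * γ.u1 t ^ 2 + γ.u3 t ^ 2)

/-- `Γ₀(p₀,p₁)`: horizontal admissible candidate curves from `p₀` to `p₁`. -/
def Gamma0 (p₀ p₁ : Pt) : Set Curve :=
  {γ | γ.Admissible ∧ γ.Horizontal ∧ γ.Joins p₀ p₁}

/-- `Γ₀⁺(p₀,p₁)`: members of `Γ₀(p₀,p₁)` with `u¹ ≥ 0` wherever defined. -/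
def Gamma0plus (p₀ p₁ : Pt) : Set Curve :=
  {γ ∈ Gamma0 p₀ p₁ | ∀ t ∈ Icc (0 : ℝ) 1, DifferentiableAt ℝ γ.x t → 0 ≤ γ.u1 t}

/-- `Γ₀⁻(p₀,p₁)`: members of `Γ₀(p₀,p₁)` with `u¹ ≤ 0` wherever defined. -/
def Gamma0minus (p₀ p₁ : Pt) : Set Curve :=
  {γ ∈ Gamma0 p₀ p₁ | ∀ t ∈ Icc (0 : ℝ) 1, DifferentiableAt ℝ γ.x t → γ.u1 t ≤ 0}

/-- The sub-Riemannian distance `d_F₀` (with `inf ∅ = +∞`). -/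
def dF0 (ξ : ℝ) (C : Pt → ℝ) (p₀ p₁ : Pt) : ℝ≥0∞ :=
  ⨅ γ ∈ Gamma0 p₀ p₁, ENNReal.ofReal (length ξ C γ)

/-- The forward (asymmetric) Finsler distance `d_F₀⁺` (with `inf ∅ = +∞`). -/
def dF0plus (ξ : ℝ) (C : Pt → ℝ) (p₀ p₁ : Pt) : ℝ≥0∞ :=
  ⨅ γ ∈ Gamma0plus p₀ p₁, ENNReal.ofReal (length ξ C γ)

/-- The backward Finsler distance `d_F₀⁻` (with `inf ∅ = +∞`). -/
def dF0minus (ξ : ℝ) (C : Pt → ℝ) (p₀ p₁ : Pt) : ℝ≥0∞ :=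
  ⨅ γ ∈ Gamma0minus p₀ p₁, ENNReal.ofReal (length ξ C γ)

/-- The cusp-free model `d_c` on the projective line bundle:
the minimum of `d_F₀⁺` over representatives `q₀ ∈ [p₀] = {p₀, p̄₀}` and
`q₁ ∈ [p₁] = {p₁, p̄₁}`. -/
def dc (ξ : ℝ) (C : Pt → ℝ) (p₀ p₁ : Pt) : ℝ≥0∞ :=
  min (min (dF0plus ξ C p₀ p₁) (dF0plus ξ C p₀ (antipode p₁)))
      (min (dF0plus ξ C (antipode p₀) p₁) (dF0plus ξ C (antipode p₀) (antipode p₁)))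

/-- The projective line bundle model `d_proj`:
the minimum of `d_F₀` over representatives of the classes. -/
def dproj (ξ : ℝ) (C : Pt → ℝ) (p₀ p₁ : Pt) : ℝ≥0∞ :=
  min (min (dF0 ξ C p₀ p₁) (dF0 ξ C p₀ (antipode p₁)))
      (min (dF0 ξ C (antipode p₀) p₁) (dF0 ξ C (antipode p₀) (antipode p₁)))

/-- `Γᶜ([p₀],[p₁])`: curves between representatives of the two classes whose
spatial control has a constant sign (nonnegative or nonpositive everywhere). -/
def GammaC (p₀ p₁ : Pt) : Set Curve :=
  (Gamma0plus p₀ p₁ ∪ Gamma0minus p₀ p₁) ∪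
  (Gamma0plus p₀ (antipode p₁) ∪ Gamma0minus p₀ (antipode p₁)) ∪
  (Gamma0plus (antipode p₀) p₁ ∪ Gamma0minus (antipode p₀) p₁) ∪
  (Gamma0plus (antipode p₀) (antipode p₁) ∪ Gamma0minus (antipode p₀) (antipode p₁))

/-- The cost function `C` is antipodally symmetric. -/
def AntipodallySymmetric (C : Pt → ℝ) : Prop :=
  ∀ x n : ℝ × ℝ, C (x, n) = C (x, -n)

/-- Distance on the circle: `ρ(θ₀, θ₁) = min_{k ∈ ℤ} |θ₁ - θ₀ + 2πk|`. -/
def rho (θ₀ θ₁ : ℝ) : ℝ :=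
  sInf (Set.range fun k : ℤ => |θ₁ - θ₀ + 2 * Real.pi * k|)

/-- Flip the orientation of a curve by adding `π` to the angle. -/
def flipCurve (γ : Curve) : Curve := ⟨γ.x, fun t => γ.th t + Real.pi⟩

lemma nvec_add_pi (θ : ℝ) : nvec (θ + Real.pi) = -nvec θ := by
  simp [nvec, Real.cos_add_pi, Real.sin_add_pi, Prod.ext_iff]

lemma antipode_antipode (p : Pt) : antipode (antipode p) = p := by
  simp [antipode]

lemma flip_th_deriv (γ : Curve) :
    deriv (flipCurve γ).th = deriv γ.th := by
  funext t
  simp [flipCurve]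

lemma u1_flip (γ : Curve) (t : ℝ) : (flipCurve γ).u1 t = - γ.u1 t := by
  simp only [Curve.u1, flipCurve, nvec_add_pi, dot]
  simp [dot]
  ring

lemma u3_flip (γ : Curve) (t : ℝ) : (flipCurve γ).u3 t = γ.u3 t := by
  simp [Curve.u3, flip_th_deriv]

lemma piecewiseC1_add_const {f : ℝ → ℝ} (hf : PiecewiseC1 f) (c : ℝ) :
    PiecewiseC1 (fun t => f t + c) := by
  obtain ⟨hc, s, hs⟩ := hf
  refine ⟨hc.add continuousOn_const, s, fun t ht => ?_⟩
  obtain ⟨h1, h2⟩ := hs t ht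
  refine ⟨h1.add_const c, ?_⟩
  have hd : deriv (fun t => f t + c) = deriv f := funext fun t => deriv_add_const c
  rw [hd]; exact h2

lemma length_flip (ξ : ℝ) (C : Pt → ℝ) (hsym : AntipodallySymmetric C) (γ : Curve) :
    length ξ C (flipCurve γ) = length ξ C γ := by
  unfold length
  apply intervalIntegral.integral_congr
  intro t _
  have h1 : (flipCurve γ).u1 t = - γ.u1 t := u1_flip γ t
  have h3 : (flipCurve γ).u3 t = γ.u3 t := u3_flip γ t
  dsimp only
  rw [h1, h3, neg_sq]
  show C (γ.x t, nvec (γ.th t + Real.pi)) * _ = _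
  rw [nvec_add_pi, ← hsym]

lemma flip_mem {a b : Pt} {γ : Curve} (h : γ ∈ Gamma0minus a b) :
    flipCurve γ ∈ Gamma0plus (antipode a) (antipode b) := by
  obtain ⟨⟨⟨hx, hth⟩, hhor, hj⟩, hsign⟩ := h
  refine ⟨⟨⟨hx, piecewiseC1_add_const hth Real.pi⟩, ?_, ?_⟩, ?_⟩
  · intro t ht hd
    obtain ⟨c, hc⟩ := hhor t ht hd
    refine ⟨-c, ?_⟩
    show deriv γ.x t = (-c) • nvec (γ.th t + Real.pi)
    rw [nvec_add_pi, hc]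
    module
  · refine ⟨hj.1, hj.2.1, ?_, ?_⟩
    · show nvec (γ.th 0 + Real.pi) = (antipode a).2
      rw [nvec_add_pi, hj.2.2.1]; rfl
    · show nvec (γ.th 1 + Real.pi) = (antipode b).2
      rw [nvec_add_pi, hj.2.2.2]; rfl
  · intro t ht hd
    rw [u1_flip]
    have := hsign t ht hd
    linarith

lemma dF0_le_dF0plus (ξ : ℝ) (C : Pt → ℝ) (a b : Pt) :
    dF0 ξ C a b ≤ dF0plus ξ C a b := by
  unfold dF0 dF0plus
  exact le_iInf₂ fun γ hγ => iInf₂_le γ hγ.1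

lemma dc_le_rep (ξ : ℝ) (C : Pt → ℝ) (p₀ p₁ a b : Pt)
    (ha : a ∈ ({p₀, antipode p₀} : Set Pt)) (hb : b ∈ ({p₁, antipode p₁} : Set Pt)) :
    dc ξ C p₀ p₁ ≤ dF0plus ξ C a b := by
  rcases ha with rfl | ha <;> [skip; (rw [Set.mem_singleton_iff] at ha; subst ha)] <;>
    (rcases hb with rfl | hb <;> [skip; (rw [Set.mem_singleton_iff] at hb; subst hb)])
  · exact (min_le_left _ _).trans (min_le_left _ _)
  · exact (min_le_left _ _).trans (min_le_right _ _)
  · exact (min_le_right _ _).trans (min_le_left _ _)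
  · exact (min_le_right _ _).trans (min_le_right _ _)

lemma antipode_rep {p q : Pt} (h : q ∈ ({p, antipode p} : Set Pt)) :
    antipode q ∈ ({p, antipode p} : Set Pt) := by
  rcases h with rfl | h
  · exact Or.inr rfl
  · rw [Set.mem_singleton_iff] at h; subst h
    exact Or.inl (antipode_antipode p)

/-- if a minimizing geodesic of `d_proj` between the classes is
cusp-free, then `d_c = d_proj`. -/
theorem dc_eq_dproj_of_cuspfree_minimizer (ξ δ : ℝ) (hξ : 0 < ξ) (hδ : 0 < δ)
    (C : Pt → ℝ) (hC : Continuous C) (hCδ : ∀ q, δ ≤ C q)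
    (hsym : AntipodallySymmetric C) (p₀ p₁ : Pt)
    (hmin : ∃ q₀ ∈ ({p₀, antipode p₀} : Set Pt), ∃ q₁ ∈ ({p₁, antipode p₁} : Set Pt),
      ∃ γ ∈ Gamma0plus q₀ q₁ ∪ Gamma0minus q₀ q₁,
        ENNReal.ofReal (length ξ C γ) = dproj ξ C p₀ p₁) :
    dc ξ C p₀ p₁ = dproj ξ C p₀ p₁ := by
  obtain ⟨q₀, hq₀, q₁, hq₁, γ, hγ, hlen⟩ := hmin
  apply le_antisymm
  · rw [← hlen]
    rcases hγ with hγ | hγ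
    · exact (dc_le_rep ξ C p₀ p₁ q₀ q₁ hq₀ hq₁).trans (iInf₂_le γ hγ)
    · have hmem := flip_mem hγ
      calc dc ξ C p₀ p₁ ≤ dF0plus ξ C (antipode q₀) (antipode q₁) :=
            dc_le_rep ξ C p₀ p₁ _ _ (antipode_rep hq₀) (antipode_rep hq₁)
        _ ≤ ENNReal.ofReal (length ξ C (flipCurve γ)) := iInf₂_le _ hmem
        _ = ENNReal.ofReal (length ξ C γ) := by rw [length_flip ξ C hsym γ]
  · exact min_le_min
      (min_le_min (dF0_le_dF0plus ξ C _ _) (dF0_le_dF0plus ξ C _ _))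
      (min_le_min (dF0_le_dF0plus ξ C _ _) (dF0_le_dF0plus ξ C _ _))

end
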